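/- (Extremal property of the spectral radius) Let A be an n×n max-plus matrix with spectral radius λ = max_{1≤m≤n} (1/m) · tr(A^m) (with tr and powers in max-plus arithmetic, and (1/m)· denoting division of the real trace by m). Then for every regular vector x ∈ ℝ^n, the scalar x⁻ ⊗ A ⊗ x = max_{i,j} (-x_i + a_{ij} + x_j) satisfies x⁻ ⊗ A ⊗ x ≥ λ, and the value λ is attained for some regular x (provided λ is finite). -/

import Mathlib

noncomputable section

/-- Max-plus carrier: ℝ ∪ {-∞}. Addition ⊕ is `max`, multiplication ⊗ is `+`
(with ⊥ = -∞ absorbing), zero is ⊥ and unit is `(0 : ℝ)`. -/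
abbrev MP := WithBot ℝ

/-- Multiplicative conjugate: negate a finite value, send -∞ to -∞. -/
def mpInv (a : MP) : MP := a.map (fun t => -t)

/-- Max-plus matrix product. -/
def mpMulM {l m n : ℕ} (A : Fin l → Fin m → MP) (B : Fin m → Fin n → MP) :
    Fin l → Fin n → MP := fun i j => Finset.univ.sup fun k => A i k + B k j

/-- Max-plus matrix-vector product. -/
def mpMulV {m n : ℕ} (A : Fin m → Fin n → MP) (x : Fin n → MP) : Fin m → MP :=
  fun i => Finset.univ.sup fun j => A i j + x j

/-- Max-plus identity matrix. -/
def mpId {n : ℕ} : Fin n → Fin n → MP := fun i j => if i = j then ((0:ℝ) : MP) else ⊥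

/-- Max-plus matrix power. -/
def mpPow {n : ℕ} (A : Fin n → Fin n → MP) : ℕ → (Fin n → Fin n → MP)
  | 0 => mpId
  | k+1 => mpMulM (mpPow A k) A

/-- Max-plus trace. -/
def mpTr {n : ℕ} (A : Fin n → Fin n → MP) : MP := Finset.univ.sup fun i => A i i

/-- Tr(A) = tr A ⊕ tr A² ⊕ ⋯ ⊕ tr Aⁿ. -/
def mpTR {n : ℕ} (A : Fin n → Fin n → MP) : MP :=
  (Finset.Icc 1 n).sup fun m => mpTr (mpPow A m)

/-- Kleene star A* = I ⊕ A ⊕ ⋯ ⊕ A^{n-1}. -/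
def mpStar {n : ℕ} (A : Fin n → Fin n → MP) : Fin n → Fin n → MP :=
  fun i j => (Finset.range n).sup fun k => mpPow A k i j

/-- Max-plus spectral radius λ = max_{1≤m≤n} tr(A^m)^{1/m}. -/
def mpLam {n : ℕ} (A : Fin n → Fin n → MP) : MP :=
  (Finset.Icc 1 n).sup fun m => (mpTr (mpPow A m)).map (fun t => t / (m : ℝ))

/-- The alternating product B^{i₀} A B^{i₁} A ⋯ A B^{iₖ}. -/
def mpChain {n : ℕ} (A B : Fin n → Fin n → MP) : (k : ℕ) → (Fin (k+1) → ℕ) → (Fin n → Fin n → MP)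
  | 0, i => mpPow B (i 0)
  | (k+1), i => mpMulM (mpChain A B k (fun j => i j.castSucc)) (mpMulM A (mpPow B (i (Fin.last (k+1)))))

/-!
Conjugating by `diag x` changes no trace of a power, so it fixes `λ`, and it turns `x⁻ ⊗ A ⊗ x`
into the largest entry of the conjugated matrix; since `(A^m)ᵢⱼ ≤ m · maxₖₗ aₖₗ`, that entry
bounds `λ`. Conversely, if `λ = l` is finite then `B = A - l` has no cycle of positive weight, so
every power of `B` is dominated by the Kleene star `B*`: a path of length `≥ n` repeats a vertex,
and cutting out the cycle does not lower its weight. Hence `y = B* ⊗ 0` is finite and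
`B ⊗ y ≤ y`, which says that conjugating by `y` brings every entry of `A` down to `l`.
-/

open Finset

section MaxPlus

variable {n : ℕ}

lemma mp_add_sup {ι : Type*} (s : Finset ι) (c : MP) (f : ι → MP) :
    c + s.sup f = s.sup fun k => c + f k :=
  apply_sup_eq_sup_comp_of_linearOrder (fun y => c + y) (fun _ _ h => add_le_add_right h c)
    (WithBot.add_bot c)

lemma mp_sup_add {ι : Type*} (s : Finset ι) (c : MP) (f : ι → MP) :
    s.sup f + c = s.sup fun k => f k + c := by
  simp only [add_comm _ c, mp_add_sup]

lemma mpPow_one (A : Fin n → Fin n → MP) : mpPow A 1 = A := by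
  funext i j
  change univ.sup (fun k => mpId i k + A k j) = A i j
  refine le_antisymm (Finset.sup_le fun k _ => ?_) (le_sup_of_le (mem_univ i) (by simp [mpId]))
  by_cases h : i = k
  · subst h; simp [mpId]
  · simp [mpId, h]

lemma mpPow_add_apply_le (A : Fin n → Fin n → MP) (a b : ℕ) (i k j : Fin n) :
    mpPow A a i k + mpPow A b k j ≤ mpPow A (a + b) i j := by
  induction b generalizing j with
  | zero =>
    by_cases h : k = j
    · subst h; simp [mpPow, mpId]
    · simp [mpPow, mpId, h]
  | succ b ih =>
    change mpPow A a i k + univ.sup (fun l => mpPow A b k l + A l j)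
      ≤ univ.sup fun l => mpPow A (a + b) i l + A l j
    rw [mp_add_sup]
    exact sup_mono_fun fun l _ => by rw [← add_assoc]; exact add_le_add_left (ih l) _

lemma mpPow_add_const (A : Fin n → Fin n → MP) (c : MP) (m : ℕ) (i j : Fin n) :
    mpPow (fun i j => A i j + c) m i j = mpPow A m i j + m • c := by
  induction m generalizing j with
  | zero => simp [mpPow]
  | succ m ih =>
    change univ.sup (fun k => mpPow _ m i k + (A k j + c))
      = univ.sup (fun k => mpPow A m i k + A k j) + (m + 1) • c
    rw [mp_sup_add]
    refine sup_congr rfl fun k _ => ?_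
    rw [ih, succ_nsmul]
    ac_rfl

lemma mpTr_mpPow_add_const (A : Fin n → Fin n → MP) (c : MP) (m : ℕ) :
    mpTr (mpPow (fun i j => A i j + c) m) = mpTr (mpPow A m) + m • c := by
  simp only [mpTr, mpPow_add_const, mp_sup_add]

/-- The diagonal similarity `diag(x)⁻¹ ⊗ A ⊗ diag(x)`. -/
def mpConj (x : Fin n → ℝ) (A : Fin n → Fin n → MP) : Fin n → Fin n → MP :=
  fun i j => ((-(x i) : ℝ) : MP) + A i j + (x j : MP)

lemma mpPow_mpConj (x : Fin n → ℝ) (A : Fin n → Fin n → MP) (m : ℕ) :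
    mpPow (mpConj x A) m = mpConj x (mpPow A m) := by
  induction m with
  | zero =>
    funext i j
    by_cases h : i = j
    · subst h; simp [mpPow, mpConj, mpId, ← WithBot.coe_add]
    · simp [mpPow, mpConj, mpId, h]
  | succ m ih =>
    funext i j
    change univ.sup (fun k => mpPow (mpConj x A) m i k + mpConj x A k j)
      = ((-(x i) : ℝ) : MP) + univ.sup (fun k => mpPow A m i k + A k j) + (x j : MP)
    rw [mp_add_sup, mp_sup_add, ih]
    refine sup_congr rfl fun k _ => ?_
    have hcancel : ((x k : ℝ) : MP) + ((-(x k) : ℝ) : MP) = 0 := by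
      rw [← WithBot.coe_add, add_neg_cancel, WithBot.coe_zero]
    calc mpConj x (mpPow A m) i k + mpConj x A k j
        = ((-(x i) : ℝ) : MP) + mpPow A m i k + (((x k : ℝ) : MP) + ((-(x k) : ℝ) : MP))
          + A k j + (x j : MP) := by simp only [mpConj]; ac_rfl
      _ = _ := by rw [hcancel, add_zero, add_assoc ((-(x i) : ℝ) : MP)]

lemma mpTr_mpConj (x : Fin n → ℝ) (A : Fin n → Fin n → MP) : mpTr (mpConj x A) = mpTr A := by
  unfold mpTr
  refine Finset.sup_congr rfl fun i _ => ?_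
  rw [mpConj, add_right_comm, ← WithBot.coe_add, neg_add_cancel, WithBot.coe_zero, zero_add]

lemma mpLam_mpConj (x : Fin n → ℝ) (A : Fin n → Fin n → MP) : mpLam (mpConj x A) = mpLam A := by
  simp only [mpLam, mpPow_mpConj, mpTr_mpConj]

lemma mpPow_succ_le_nsmul (A : Fin n → Fin n → MP) (M : MP) (hA : ∀ i j, A i j ≤ M) (m : ℕ)
    (i j : Fin n) : mpPow A (m + 1) i j ≤ (m + 1) • M := by
  induction m generalizing j with
  | zero => simpa [mpPow_one] using hA i j
  | succ m ih =>
    change univ.sup (fun k => mpPow A (m + 1) i k + A k j) ≤ _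
    refine Finset.sup_le fun k _ => ?_
    rw [succ_nsmul]
    exact add_le_add (ih k) (hA k j)

lemma map_div_le_iff_le_nsmul (t M : MP) {m : ℕ} (hm : 0 < m) :
    t.map (· / (m : ℝ)) ≤ M ↔ t ≤ m • M := by
  have hm' : (0 : ℝ) < m := Nat.cast_pos.2 hm
  induction M using WithBot.recBotCoe with
  | bot =>
    obtain ⟨m, rfl⟩ := Nat.exists_eq_add_one_of_ne_zero hm.ne'
    simp [succ_nsmul]
  | coe r =>
    induction t using WithBot.recBotCoe with
    | bot => simp
    | coe t =>
      rw [← WithBot.coe_nsmul, WithBot.map_coe, WithBot.coe_le_coe, WithBot.coe_le_coe,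
        nsmul_eq_mul, div_le_iff₀ hm', mul_comm]

lemma mpLam_le_of_forall_le (A : Fin n → Fin n → MP) (M : MP) (hA : ∀ i j, A i j ≤ M) :
    mpLam A ≤ M := by
  refine Finset.sup_le fun m hm => ?_
  obtain ⟨m, rfl⟩ := Nat.exists_eq_add_one_of_ne_zero (Nat.one_le_iff_ne_zero.1 (mem_Icc.1 hm).1)
  rw [map_div_le_iff_le_nsmul _ _ m.succ_pos]
  exact Finset.sup_le fun i _ => mpPow_succ_le_nsmul A M hA m i i

lemma mpLam_le_sup_mpConj (A : Fin n → Fin n → MP) (x : Fin n → ℝ) :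
    mpLam A ≤ univ.sup fun i => univ.sup fun j => mpConj x A i j := by
  rw [← mpLam_mpConj x]
  exact mpLam_le_of_forall_le _ _ fun i j =>
    le_sup_of_le (mem_univ i) (le_sup (f := fun j => mpConj x A i j) (mem_univ j))

def pathWeight (B : Fin n → Fin n → MP) (p : ℕ → Fin n) (m : ℕ) : MP :=
  ∑ k ∈ range m, B (p k) (p (k + 1))

lemma pathWeight_add (B : Fin n → Fin n → MP) (p : ℕ → Fin n) (a b : ℕ) :
    pathWeight B p (a + b) = pathWeight B p a + pathWeight B (fun k => p (a + k)) b := by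
  simp only [pathWeight, sum_range_add, add_assoc]

lemma pathWeight_succ (B : Fin n → Fin n → MP) (p : ℕ → Fin n) (m : ℕ) :
    pathWeight B p (m + 1) = pathWeight B p m + B (p m) (p (m + 1)) :=
  sum_range_succ _ _

lemma pathWeight_le_mpPow (B : Fin n → Fin n → MP) (p : ℕ → Fin n) (m : ℕ) :
    pathWeight B p m ≤ mpPow B m (p 0) (p m) := by
  induction m with
  | zero => simp [pathWeight, mpPow, mpId]
  | succ m ih =>
    rw [pathWeight_succ]
    exact (add_le_add_left ih _).trans
      (le_sup (f := fun k => mpPow B m (p 0) k + B k (p (m + 1))) (mem_univ (p m)))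

lemma exists_pathWeight_eq_mpPow (B : Fin n → Fin n → MP) (m : ℕ) (i q : Fin n) :
    ∃ p : ℕ → Fin n, p 0 = i ∧ p (m + 1) = q ∧ pathWeight B p (m + 1) = mpPow B (m + 1) i q := by
  induction m generalizing q with
  | zero => exact ⟨fun k => if k = 0 then i else q, rfl, rfl, by simp [pathWeight, mpPow_one]⟩
  | succ m ih =>
    obtain ⟨k, -, hk⟩ :=
      exists_mem_eq_sup univ ⟨i, mem_univ i⟩ fun k => mpPow B (m + 1) i k + B k q
    obtain ⟨p, hp0, hpk, hw⟩ := ih k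
    refine ⟨fun j => if j ≤ m + 1 then p j else q, by simp [hp0], by simp, ?_⟩
    have hprefix : pathWeight B (fun j => if j ≤ m + 1 then p j else q) (m + 1)
        = pathWeight B p (m + 1) :=
      sum_congr rfl fun j hj => by
        have := mem_range.1 hj
        simp only [if_pos (show j ≤ m + 1 by omega), if_pos (show j + 1 ≤ m + 1 by omega)]
    rw [pathWeight_succ, hprefix, hw]
    simp only [le_refl, if_true, hpk, show ¬m + 1 + 1 ≤ m + 1 by omega, if_false]
    exact hk.symm

lemma exists_lt_le_apply_eq (p : ℕ → Fin n) : ∃ a b, a < b ∧ b ≤ n ∧ p a = p b := by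
  obtain ⟨a, b, hne, heq⟩ :=
    Fintype.exists_ne_map_eq_of_card_lt (fun j : Fin (n + 1) => p j) (by simp)
  rcases hne.lt_or_gt with hab | hba
  · exact ⟨a, b, hab, Nat.lt_succ_iff.1 b.isLt, heq⟩
  · exact ⟨b, a, hba, Nat.lt_succ_iff.1 a.isLt, heq.symm⟩

lemma mpPow_le_mpStar (B : Fin n → Fin n → MP)
    (hB : ∀ m, 1 ≤ m → m ≤ n → mpTr (mpPow B m) ≤ 0) (m : ℕ) (i q : Fin n) :
    mpPow B m i q ≤ mpStar B i q := by
  induction m using Nat.strong_induction_on generalizing i q with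
  | _ m ih =>
    rcases lt_or_ge m n with hmn | hnm
    · exact le_sup (f := fun k => mpPow B k i q) (mem_range.2 hmn)
    obtain ⟨m, rfl⟩ : ∃ m', m = m' + 1 := ⟨m - 1, by have := i.pos; omega⟩
    obtain ⟨p, rfl, rfl, hw⟩ := exists_pathWeight_eq_mpPow B m i q
    obtain ⟨a, b, hab, hbn, hpab⟩ := exists_lt_le_apply_eq p
    have hsplit : pathWeight B p (m + 1) = pathWeight B p a
        + (pathWeight B (fun k => p (a + k)) (b - a)
          + pathWeight B (fun k => p (b + k)) (m + 1 - b)) := by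
      have h := pathWeight_add B p a (b - a + (m + 1 - b))
      rw [pathWeight_add B (fun k => p (a + k)),
        show a + (b - a + (m + 1 - b)) = m + 1 by omega] at h
      simpa only [show ∀ k, a + (b - a + k) = b + k from fun k => by omega] using h
    have hcycle : pathWeight B (fun k => p (a + k)) (b - a) ≤ 0 := by
      refine (pathWeight_le_mpPow B _ _).trans ?_
      simp only [add_zero, show a + (b - a) = b by omega, ← hpab]
      exact (le_sup (f := fun j => mpPow B (b - a) j j) (mem_univ (p a))).trans
        (hB _ (by omega) (by omega))
    rw [← hw, hsplit]
    calc pathWeight B p a + (pathWeight B (fun k => p (a + k)) (b - a)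
          + pathWeight B (fun k => p (b + k)) (m + 1 - b))
        ≤ mpPow B a (p 0) (p a) + (0 + mpPow B (m + 1 - b) (p a) (p (m + 1))) := by
          gcongr
          · exact pathWeight_le_mpPow B p a
          · simpa [hpab, show b + (m + 1 - b) = m + 1 by omega] using
              pathWeight_le_mpPow B (fun k => p (b + k)) (m + 1 - b)
      _ ≤ mpPow B (a + (m + 1 - b)) (p 0) (p (m + 1)) := by
          rw [zero_add]; exact mpPow_add_apply_le B _ _ _ _ _
      _ ≤ mpStar B (p 0) (p (m + 1)) := ih _ (by omega) _ _

lemma add_sup_mpStar_le (B : Fin n → Fin n → MP)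
    (hB : ∀ m i q, mpPow B m i q ≤ mpStar B i q) (i j : Fin n) :
    B i j + univ.sup (mpStar B j) ≤ univ.sup (mpStar B i) := by
  rw [mp_add_sup]
  refine Finset.sup_le fun q _ => le_sup_of_le (mem_univ q) ?_
  rw [mpStar, mp_add_sup]
  refine Finset.sup_le fun k _ => ?_
  calc B i j + mpPow B k j q = mpPow B 1 i j + mpPow B k j q := by rw [mpPow_one]
    _ ≤ mpPow B (1 + k) i q := mpPow_add_apply_le B 1 k i j q
    _ ≤ mpStar B i q := hB _ _ _

lemma exists_mpConj_le (A : Fin n → Fin n → MP) (l : ℝ) (hl : mpLam A = l) :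
    ∃ y : Fin n → ℝ, ∀ i j, mpConj y A i j ≤ l := by
  set B : Fin n → Fin n → MP := fun i j => A i j + ((-l : ℝ) : MP)
  have hcycle : ∀ m, 1 ≤ m → m ≤ n → mpTr (mpPow B m) ≤ 0 := by
    intro m hm hmn
    have htr : mpTr (mpPow A m) ≤ m • (l : MP) := by
      rw [← map_div_le_iff_le_nsmul _ _ hm, ← hl]
      exact le_sup (f := fun m => (mpTr (mpPow A m)).map (fun t => t / (m : ℝ)))
        (mem_Icc.2 ⟨hm, hmn⟩)
    calc mpTr (mpPow B m) = mpTr (mpPow A m) + m • ((-l : ℝ) : MP) := mpTr_mpPow_add_const _ _ _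
      _ ≤ m • (l : MP) + m • ((-l : ℝ) : MP) := add_le_add_left htr _
      _ = 0 := by rw [← nsmul_add, ← WithBot.coe_add, add_neg_cancel, WithBot.coe_zero, nsmul_zero]
  have hpow := mpPow_le_mpStar B hcycle
  have hfinite : ∀ i, ∃ r : ℝ, univ.sup (mpStar B i) = r := fun i => by
    have h0 : ((0 : ℝ) : MP) ≤ univ.sup (mpStar B i) :=
      le_sup_of_le (mem_univ i) (by simpa [mpPow, mpId] using hpow 0 i i)
    obtain ⟨r, hr⟩ := WithBot.ne_bot_iff_exists.1 (ne_bot_of_le_ne_bot WithBot.coe_ne_bot h0)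
    exact ⟨r, hr.symm⟩
  choose y hy using hfinite
  refine ⟨y, fun i j => ?_⟩
  have hsub := add_sup_mpStar_le B hpow i j
  rw [hy, hy] at hsub
  induction h : A i j using WithBot.recBotCoe with
  | bot => simp [mpConj, h]
  | coe a =>
    simp only [B, h, ← WithBot.coe_add, WithBot.coe_le_coe] at hsub
    simp only [mpConj, h, ← WithBot.coe_add, WithBot.coe_le_coe]
    linarith

end MaxPlus

/-- Extremal property of the spectral radius: x⁻ ⊗ A ⊗ x ≥ λ for all regular x,
with the value λ attained when λ is finite. -/
theorem maxplus_spectral_extremal {n : ℕ} (A : Fin n → Fin n → MP) :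
    (∀ x : Fin n → ℝ,
      mpLam A ≤ Finset.univ.sup fun i => Finset.univ.sup fun j =>
        ((-(x i) : ℝ) : MP) + A i j + (x j : MP)) ∧
    (mpLam A ≠ ⊥ → ∃ x : Fin n → ℝ,
      (Finset.univ.sup fun i => Finset.univ.sup fun j =>
        ((-(x i) : ℝ) : MP) + A i j + (x j : MP)) = mpLam A) := by
  refine ⟨mpLam_le_sup_mpConj A, fun hne => ?_⟩
  obtain ⟨l, hl⟩ := WithBot.ne_bot_iff_exists.1 hne
  obtain ⟨y, hy⟩ := exists_mpConj_le A l hl.symm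
  refine ⟨y, le_antisymm ?_ (mpLam_le_sup_mpConj A y)⟩
  rw [← hl]
  exact Finset.sup_le fun i _ => Finset.sup_le fun j _ => hy i j
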